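/- Define $F(x_1, x_2, x_3) = 2(x_1^3 + x_2^3 + x_3^3) - 5(x_1^2 + x_2^2 + x_3^2) + 9$ on the closed simplex $\{(x_1,x_2,x_3) : x_i \geq 0, \; x_1 + x_2 + x_3 = 3\}$. Then $\min F = 0$, attained exactly at $(1,1,1)$ and at the three permutations of $(0, 3/2, 3/2)$. -/
import Mathlib

noncomputable def F (x₁ x₂ x₃ : ℝ) : ℝ :=
  2 * (x₁^3 + x₂^3 + x₃^3) - 5 * (x₁^2 + x₂^2 + x₃^2) + 9

set_option maxHeartbeats 1600000 in
lemma key (a b c : ℝ) (ha : -1 ≤ a) (hb : -1 ≤ b) (hc : -1 ≤ c)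
    (h : a + b + c = 0) :
    0 ≤ a^2 + b^2 + c^2 + 6*a*b*c ∧
    (a^2 + b^2 + c^2 + 6*a*b*c = 0 ↔
      (a = 0 ∧ b = 0 ∧ c = 0) ∨ (a = -1 ∧ b = 1/2 ∧ c = 1/2) ∨
      (b = -1 ∧ a = 1/2 ∧ c = 1/2) ∨ (c = -1 ∧ a = 1/2 ∧ b = 1/2)) := by
  have back : ∀ p q r : ℝ,
      (p = 0 ∧ q = 0 ∧ r = 0) ∨ (p = -1 ∧ q = 1/2 ∧ r = 1/2) ∨
      (q = -1 ∧ p = 1/2 ∧ r = 1/2) ∨ (r = -1 ∧ p = 1/2 ∧ q = 1/2) →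
      p^2 + q^2 + r^2 + 6*p*q*r = 0 := by
    rintro p q r (⟨e1,e2,e3⟩|⟨e1,e2,e3⟩|⟨e1,e2,e3⟩|⟨e1,e2,e3⟩) <;>
      rw [e1, e2, e3] <;> norm_num
  suffices H : 0 ≤ a^2 + b^2 + c^2 + 6*a*b*c ∧
      (a^2 + b^2 + c^2 + 6*a*b*c = 0 →
        (a = 0 ∧ b = 0 ∧ c = 0) ∨ (a = -1 ∧ b = 1/2 ∧ c = 1/2) ∨
        (b = -1 ∧ a = 1/2 ∧ c = 1/2) ∨ (c = -1 ∧ a = 1/2 ∧ b = 1/2)) by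
    exact ⟨H.1, H.2, back a b c⟩
  have key2 : ∀ u v : ℝ, 0 < u → 0 < v → u + v ≤ 1 →
      (0 ≤ u^2 + v^2 + (u+v)^2 - 6*u*v*(u+v)) ∧
      (u^2 + v^2 + (u+v)^2 - 6*u*v*(u+v) = 0 → u = 1/2 ∧ v = 1/2) := by
    intro u v hu hv huv
    have hid : u^2 + v^2 + (u+v)^2 - 6*u*v*(u+v) = 2*(u-v)^2 + 6*(u*v)*(1-(u+v)) := by
      ring
    have h1 : 0 ≤ 2*(u-v)^2 := by positivity
    have h2 : 0 ≤ 6*(u*v)*(1-(u+v)) := by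
      have : 0 ≤ u*v := by positivity
      nlinarith
    refine ⟨by rw [hid]; linarith, ?_⟩
    intro h0
    rw [hid] at h0
    have e1 : (u-v)^2 = 0 := by nlinarith
    have e2 : u*v*(1-(u+v)) = 0 := by nlinarith
    have huv' : u = v := by nlinarith [sq_nonneg (u-v)]
    have huvpos : u*v > 0 := by positivity
    have : 1 - (u+v) = 0 := by
      rcases mul_eq_zero.mp e2 with h' | h'
      · exact absurd h' (ne_of_gt huvpos)
      · exact h'
    constructor <;> nlinarith
  rcases le_or_gt a 0 with ha0 | ha0 <;> rcases le_or_gt b 0 with hb0 | hb0 <;>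
    rcases le_or_gt c 0 with hc0 | hc0
  · -- all ≤ 0 : forces a=b=c=0
    have e1 : a = 0 := by linarith
    have e2 : b = 0 := by linarith
    have e3 : c = 0 := by linarith
    rw [e1, e2, e3]; norm_num
  · -- a≤0, b≤0, c>0
    have habc : 0 ≤ a*b*c := by nlinarith [mul_nonneg (mul_nonneg (neg_nonneg.mpr ha0) (neg_nonneg.mpr hb0)) hc0.le]
    refine ⟨by nlinarith, ?_⟩
    intro h0
    exfalso
    have hq : a^2 + b^2 + c^2 = 0 := by nlinarith
    have : c = 0 := by nlinarith [sq_nonneg a, sq_nonneg b, sq_nonneg c]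
    linarith
  · -- a≤0, b>0, c≤0
    have habc : 0 ≤ a*b*c := by
      nlinarith [mul_nonneg (mul_nonneg (neg_nonneg.mpr ha0) (neg_nonneg.mpr hc0)) hb0.le]
    refine ⟨by nlinarith, ?_⟩
    intro h0
    exfalso
    have hq : a^2 + b^2 + c^2 = 0 := by nlinarith
    have : b = 0 := by nlinarith [sq_nonneg a, sq_nonneg b, sq_nonneg c]
    linarith
  · -- a≤0, b>0, c>0 : a = -(b+c)
    have hbc : b + c ≤ 1 := by linarith
    obtain ⟨h1, h2⟩ := key2 b c hb0 hc0 hbc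
    have hrw : a^2 + b^2 + c^2 + 6*a*b*c
        = b^2 + c^2 + (b+c)^2 - 6*b*c*(b+c) := by
      have : a = -(b+c) := by linarith
      rw [this]; ring
    refine ⟨by rw [hrw]; linarith, ?_⟩
    intro h0
    rw [hrw] at h0
    obtain ⟨hbe, hce⟩ := h2 h0
    right; left
    exact ⟨by linarith, hbe, hce⟩
  · -- a>0, b≤0, c≤0
    have habc : 0 ≤ a*b*c := by
      nlinarith [mul_nonneg (mul_nonneg (neg_nonneg.mpr hb0) (neg_nonneg.mpr hc0)) ha0.le]
    refine ⟨by nlinarith, ?_⟩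
    intro h0
    exfalso
    have hq : a^2 + b^2 + c^2 = 0 := by nlinarith
    have : a = 0 := by nlinarith [sq_nonneg a, sq_nonneg b, sq_nonneg c]
    linarith
  · -- a>0, b≤0, c>0 : b = -(a+c)
    have hac : a + c ≤ 1 := by linarith
    obtain ⟨h1, h2⟩ := key2 a c ha0 hc0 hac
    have hrw : a^2 + b^2 + c^2 + 6*a*b*c
        = a^2 + c^2 + (a+c)^2 - 6*a*c*(a+c) := by
      have : b = -(a+c) := by linarith
      rw [this]; ring
    refine ⟨by rw [hrw]; linarith, ?_⟩
    intro h0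
    rw [hrw] at h0
    obtain ⟨hae, hce⟩ := h2 h0
    right; right; left
    exact ⟨by linarith, hae, hce⟩
  · -- a>0, b>0, c≤0 : c = -(a+b)
    have hab : a + b ≤ 1 := by linarith
    obtain ⟨h1, h2⟩ := key2 a b ha0 hb0 hab
    have hrw : a^2 + b^2 + c^2 + 6*a*b*c
        = a^2 + b^2 + (a+b)^2 - 6*a*b*(a+b) := by
      have : c = -(a+b) := by linarith
      rw [this]; ring
    refine ⟨by rw [hrw]; linarith, ?_⟩
    intro h0
    rw [hrw] at h0
    obtain ⟨hae, hbe⟩ := h2 h0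
    right; right; right
    exact ⟨by linarith, hae, hbe⟩
  · -- all > 0 : contradicts sum = 0
    exfalso; linarith

theorem stmt_17 :
    ∀ x₁ x₂ x₃ : ℝ, 0 ≤ x₁ → 0 ≤ x₂ → 0 ≤ x₃ → x₁ + x₂ + x₃ = 3 →
      0 ≤ F x₁ x₂ x₃ ∧
      (F x₁ x₂ x₃ = 0 ↔
        (x₁, x₂, x₃) = (1, 1, 1) ∨ (x₁, x₂, x₃) = (0, 3/2, 3/2) ∨
        (x₁, x₂, x₃) = (3/2, 0, 3/2) ∨ (x₁, x₂, x₃) = (3/2, 3/2, 0)) := by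
  intro x₁ x₂ x₃ h1 h2 h3 hsum
  have hF : F x₁ x₂ x₃ = (x₁-1)^2 + (x₂-1)^2 + (x₃-1)^2
      + 6*(x₁-1)*(x₂-1)*(x₃-1) := by
    unfold F
    linear_combination (2*x₁^2 + 2*x₂^2 + 2*x₃^2 - 2*x₁*x₂ - 2*x₁*x₃ - 2*x₂*x₃ - 4) * hsum
  obtain ⟨hk1, hk2⟩ := key (x₁-1) (x₂-1) (x₃-1)
    (by linarith) (by linarith) (by linarith) (by linarith)
  refine ⟨by rw [hF]; exact hk1, ?_⟩
  rw [hF, hk2]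
  simp only [Prod.mk.injEq]
  constructor
  · rintro (⟨e1,e2,e3⟩|⟨e1,e2,e3⟩|⟨e1,e2,e3⟩|⟨e1,e2,e3⟩)
    · exact Or.inl ⟨by linarith, by linarith, by linarith⟩
    · exact Or.inr (Or.inl ⟨by linarith, by linarith, by linarith⟩)
    · exact Or.inr (Or.inr (Or.inl ⟨by linarith, by linarith, by linarith⟩))
    · exact Or.inr (Or.inr (Or.inr ⟨by linarith, by linarith, by linarith⟩))
  · rintro (⟨e1,e2,e3⟩|⟨e1,e2,e3⟩|⟨e1,e2,e3⟩|⟨e1,e2,e3⟩)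
    · exact Or.inl ⟨by linarith, by linarith, by linarith⟩
    · exact Or.inr (Or.inl ⟨by linarith, by linarith, by linarith⟩)
    · exact Or.inr (Or.inr (Or.inl ⟨by linarith, by linarith, by linarith⟩))
    · exact Or.inr (Or.inr (Or.inr ⟨by linarith, by linarith, by linarith⟩))
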